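/- arXiv:0707.3894 — 2 statements merged into one kernel-verified Lean document; each statement's English description precedes it below -/
import Mathlib

section
/- Let R be a Kähler algebraic curvature tensor on (V,J) with nonnegative isotropic curvature, and let u, v be orthonormal vectors with ⟨u,Jv⟩ = 0. If R^iso(u,Ju,Jv,v) = 0, i.e. the frame (u,Ju,Jv,v) has vanishing isotropic curvature, while additionally R(u,Ju,v,Jv) = R(u,Jv,u,Jv) + R(u,v,u,v), then R(u,Ju,v,Jv) = 0 and R(u,Jv,u,Jv) + R(u,v,u,v) = 0. -/
open scoped RealInnerProductSpace

/- Expanding `R^iso(u, Ju, Jv, v)` with the Kähler symmetries turns it into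
`2 (R(u,Jv,u,Jv) + R(u,v,u,v) + R(u,Ju,v,Jv))`. Its vanishing together with the assumed
relation `R(u,Ju,v,Jv) = R(u,Jv,u,Jv) + R(u,v,u,v)` forces both quantities to be zero. -/

/-- The isotropic-curvature expression of an algebraic curvature tensor on a 4-frame. -/
def isoCurv {E : Type*} [NormedAddCommGroup E] [InnerProductSpace ℝ E]
    (R : E →ₗ[ℝ] E →ₗ[ℝ] E →ₗ[ℝ] E →ₗ[ℝ] ℝ) (e₁ e₂ e₃ e₄ : E) : ℝ :=
  R e₁ e₃ e₁ e₃ + R e₁ e₄ e₁ e₄ + R e₂ e₃ e₂ e₃ + R e₂ e₄ e₂ e₄ - 2 * R e₁ e₂ e₃ e₄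

section CurvatureTensor

variable {M : Type*} [AddCommGroup M] [Module ℝ M]

theorem curv_antisymm_right (R : M →ₗ[ℝ] M →ₗ[ℝ] M →ₗ[ℝ] M →ₗ[ℝ] ℝ)
    (hA : ∀ x y z w, R x y z w = - R y x z w) (hP : ∀ x y z w, R x y z w = R z w x y)
    (x y z w : M) : R x y z w = - R x y w z := by
  rw [hP x y z w, hA z w x y, ← hP w z x y]

theorem curv_apply_J_left (R : M →ₗ[ℝ] M →ₗ[ℝ] M →ₗ[ℝ] M →ₗ[ℝ] ℝ) (J : M →ₗ[ℝ] M)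
    (hJ2 : ∀ x, J (J x) = -x) (hK : ∀ x y z w, R (J x) (J y) z w = R x y z w)
    (x y z w : M) : R (J x) y z w = - R x (J y) z w := by
  have h := hK x (J y) z w
  simp only [hJ2, map_neg, LinearMap.neg_apply] at h
  linarith

end CurvatureTensor

theorem isoCurv_kaehler_frame {E : Type*} [NormedAddCommGroup E] [InnerProductSpace ℝ E]
    (R : E →ₗ[ℝ] E →ₗ[ℝ] E →ₗ[ℝ] E →ₗ[ℝ] ℝ)
    (hA : ∀ x y z w, R x y z w = - R y x z w) (hP : ∀ x y z w, R x y z w = R z w x y)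
    (J : E →ₗ[ℝ] E) (hJ2 : ∀ x, J (J x) = -x) (hK : ∀ x y z w, R (J x) (J y) z w = R x y z w)
    (u v : E) :
    isoCurv R u (J u) (J v) v = 2 * (R u (J v) u (J v) + R u v u v + R u (J u) v (J v)) := by
  have hJJ : R (J u) (J v) (J u) (J v) = R u v u v := by
    rw [hK, hP, hK]
  have hJv : R (J u) v (J u) v = R u (J v) u (J v) := by
    rw [curv_apply_J_left R J hJ2 hK, hP, curv_apply_J_left R J hJ2 hK, neg_neg]
  rw [isoCurv, hJJ, hJv, curv_antisymm_right R hA hP u (J u) (J v) v]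
  ring

theorem kaehler_nonneg_isoCurv_vanishing_general
    {E : Type*} [NormedAddCommGroup E] [InnerProductSpace ℝ E]
    (R : E →ₗ[ℝ] E →ₗ[ℝ] E →ₗ[ℝ] E →ₗ[ℝ] ℝ)
    (hA : ∀ x y z w, R x y z w = - R y x z w)
    (hP : ∀ x y z w, R x y z w = R z w x y)
    (J : E →ₗ[ℝ] E)
    (hJ2 : ∀ x, J (J x) = -x)
    (hK : ∀ x y z w, R (J x) (J y) z w = R x y z w)
    (u v : E)
    (hzero : isoCurv R u (J u) (J v) v = 0)
    (hrel : R u (J u) v (J v) = R u (J v) u (J v) + R u v u v) :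
    R u (J u) v (J v) = 0 ∧ R u (J v) u (J v) + R u v u v = 0 := by
  have hexpand := isoCurv_kaehler_frame R hA hP J hJ2 hK u v
  rw [hzero] at hexpand
  constructor <;> linarith

/-- Let `R` be a Kähler algebraic curvature tensor on `(V,J)` with
nonnegative isotropic curvature, and let `u, v` be orthonormal with `⟪u,Jv⟫ = 0`.
If `Riso(u,Ju,Jv,v) = 0` and moreover `R(u,Ju,v,Jv) = R(u,Jv,u,Jv) + R(u,v,u,v)`, then
`R(u,Ju,v,Jv) = 0` and `R(u,Jv,u,Jv) + R(u,v,u,v) = 0`. -/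
theorem kaehler_nonneg_isoCurv_vanishing
    {E : Type*} [NormedAddCommGroup E] [InnerProductSpace ℝ E]
    (R : E →ₗ[ℝ] E →ₗ[ℝ] E →ₗ[ℝ] E →ₗ[ℝ] ℝ)
    (hA : ∀ x y z w, R x y z w = - R y x z w)
    (hP : ∀ x y z w, R x y z w = R z w x y)
    (hB1 : ∀ x y z w, R x y z w + R y z x w + R z x y w = 0)
    (J : E →ₗ[ℝ] E)
    (hJ2 : ∀ x, J (J x) = -x)
    (hJO : ∀ x y, ⟪J x, J y⟫ = ⟪x, y⟫)
    (hK : ∀ x y z w, R (J x) (J y) z w = R x y z w)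
    (hNonneg : ∀ e₁ e₂ e₃ e₄ : E, Orthonormal ℝ ![e₁, e₂, e₃, e₄] →
      0 ≤ isoCurv R e₁ e₂ e₃ e₄)
    (u v : E) (hu : ‖u‖ = 1) (hv : ‖v‖ = 1)
    (huv : ⟪u, v⟫ = 0) (huJv : ⟪u, J v⟫ = 0)
    (hzero : isoCurv R u (J u) (J v) v = 0)
    (hrel : R u (J u) v (J v) = R u (J v) u (J v) + R u v u v) :
    R u (J u) v (J v) = 0 ∧ R u (J v) u (J v) + R u v u v = 0 :=
  kaehler_nonneg_isoCurv_vanishing_general R hA hP J hJ2 hK u v hzero hrel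
end

section
/- Let R be a Kähler algebraic curvature tensor on (V,J) and u, v orthonormal with ⟨u,Jv⟩=0, satisfying R(u,Ju,v,Jv) = R(u,Jv,u,Jv) + R(u,v,u,v) = 0, and suppose the same relations hold for the rotated pairs ((u−Jv)/√2, (u+Jv)/√2) and ((u−v)/√2, (u+v)/√2). Then R(u,v,u,v) = R(u,Jv,u,Jv) = 0 and R(u,Ju,u,Ju) + R(v,Jv,v,Jv) = 0. -/
/-!
Write `x ∧ y` for the first (or second) pair of slots of `R`. For the rotated pair
`(x - J y, x + J y)` one has `J (x ∓ J y) = J x ± y`, and the Kähler symmetry turns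
`(x ∓ J y) ∧ (J x ± y)` into `α ± 2 β` with `α = x ∧ J x + y ∧ J y` and `β = x ∧ y`. Pair symmetry
then gives `R(α + 2β, α - 2β) = R(α, α) - 4 R(β, β)`, i.e.
`R(x,Jx,x,Jx) + 2 R(x,Jx,y,Jy) + R(y,Jy,y,Jy) - 4 R(x,y,x,y)`.
The pair `(x - y, x + y)` is the case `y ↦ -J y`, with `R(x,Jy,x,Jy)` in place of `R(x,y,x,y)`.
For `(u, v)` both rotated relations say `R(u,Ju,u,Ju) + R(v,Jv,v,Jv)` equals
`4 R(u,v,u,v)` and `4 R(u,Jv,u,Jv)`, whose sum vanishes.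
-/

section KaehlerCurvature

variable {𝕜 E : Type*} [CommRing 𝕜] [AddCommGroup E] [Module 𝕜 E]

/- Instance synthesis does not find `AddCommGroup (E →ₗ[𝕜] E →ₗ[𝕜] E →ₗ[𝕜] 𝕜)`, so `map_neg` and
`map_sub` do not apply in the first slot of a quadrilinear form. -/
theorem LinearMap.map_neg₄ (R : E →ₗ[𝕜] E →ₗ[𝕜] E →ₗ[𝕜] E →ₗ[𝕜] 𝕜) (x y z w : E) :
    R (-x) y z w = - R x y z w := by
  rw [← neg_one_smul 𝕜 x, map_smul]
  simp only [LinearMap.smul_apply, smul_eq_mul, neg_one_mul]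

theorem LinearMap.map_sub₄ (R : E →ₗ[𝕜] E →ₗ[𝕜] E →ₗ[𝕜] E →ₗ[𝕜] 𝕜) (x x' y z w : E) :
    R (x - x') y z w = R x y z w - R x' y z w := by
  rw [sub_eq_add_neg, map_add, LinearMap.add_apply, LinearMap.add_apply, LinearMap.add_apply,
    LinearMap.map_neg₄, ← sub_eq_add_neg]

variable {R : E →ₗ[𝕜] E →ₗ[𝕜] E →ₗ[𝕜] E →ₗ[𝕜] 𝕜} {J : E →ₗ[𝕜] E}

theorem curvature_apply_swap_right (hA : ∀ x y z w, R x y z w = - R y x z w)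
    (hP : ∀ x y z w, R x y z w = R z w x y) (x y z w : E) :
    R x y z w = - R x y w z := by
  rw [hP, hA, hP]

theorem curvature_sub_J_apply_J_sub_J (hA : ∀ x y z w, R x y z w = - R y x z w)
    (hJ2 : ∀ x, J (J x) = -x) (hK : ∀ x y z w, R (J x) (J y) z w = R x y z w) (x y z w : E) :
    R (x - J y) (J (x - J y)) z w = R x (J x) z w + 2 * R x y z w + R y (J y) z w := by
  have hJyJx : R (J y) (J x) z w = - R x y z w := by rw [hK, hA]
  have hJyy : R (J y) y z w = - R y (J y) z w := hA _ _ _ _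
  simp only [LinearMap.map_sub₄, map_sub, hJ2, sub_neg_eq_add, map_add, LinearMap.add_apply,
    hJyJx, hJyy]
  ring

theorem curvature_rotation_sub_add_J (hA : ∀ x y z w, R x y z w = - R y x z w)
    (hP : ∀ x y z w, R x y z w = R z w x y) (hJ2 : ∀ x, J (J x) = -x)
    (hK : ∀ x y z w, R (J x) (J y) z w = R x y z w) (x y : E) :
    R (x - J y) (J (x - J y)) (x + J y) (J (x + J y)) =
      R x (J x) x (J x) + 2 * R x (J x) y (J y) + R y (J y) y (J y) - 4 * R x y x y := by
  have hplus : x + J y = x - J (-y) := by simp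
  have hsecond (p q : E) : R p q (x + J y) (J (x + J y)) =
      R p q x (J x) - 2 * R p q x y + R p q y (J y) := by
    rw [hP, hplus, curvature_sub_J_apply_J_sub_J hA hJ2 hK]
    simp only [map_neg, LinearMap.map_neg₄, LinearMap.neg_apply, neg_neg]
    rw [hP x (J x), hP x y, hP y (J y)]
    ring
  rw [curvature_sub_J_apply_J_sub_J hA hJ2 hK, hsecond, hsecond, hsecond,
    hP x y x (J x), hP y (J y) x (J x), hP y (J y) x y]
  ring

theorem curvature_rotation_sub_add (hA : ∀ x y z w, R x y z w = - R y x z w)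
    (hP : ∀ x y z w, R x y z w = R z w x y) (hJ2 : ∀ x, J (J x) = -x)
    (hK : ∀ x y z w, R (J x) (J y) z w = R x y z w) (x y : E) :
    R (x - y) (J (x - y)) (x + y) (J (x + y)) =
      R x (J x) x (J x) + 2 * R x (J x) y (J y) + R y (J y) y (J y) - 4 * R x (J y) x (J y) := by
  have h := curvature_rotation_sub_add_J hA hP hJ2 hK x (-J y)
  simp only [map_neg, hJ2, neg_neg, LinearMap.map_neg₄, LinearMap.neg_apply] at h
  rw [h, curvature_apply_swap_right hA hP x (J x) (J y) y, hA (J y) y,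
    curvature_apply_swap_right hA hP y (J y) (J y) y]
  ring

theorem curvature_smul_apply_J_smul (c : 𝕜) (a b : E) :
    R (c • a) (J (c • a)) (c • b) (J (c • b)) = c ^ 4 * R a (J a) b (J b) := by
  simp only [map_smul, LinearMap.smul_apply, smul_eq_mul]
  ring

end KaehlerCurvature

open scoped RealInnerProductSpace

theorem kaehler_rotation_vanishing_general
    {E : Type*} [NormedAddCommGroup E] [InnerProductSpace ℝ E]
    (R : E →ₗ[ℝ] E →ₗ[ℝ] E →ₗ[ℝ] E →ₗ[ℝ] ℝ)
    (hA : ∀ x y z w, R x y z w = - R y x z w)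
    (hP : ∀ x y z w, R x y z w = R z w x y)
    (J : E →ₗ[ℝ] E)
    (hJ2 : ∀ x, J (J x) = -x)
    (hK : ∀ x y z w, R (J x) (J y) z w = R x y z w)
    (u v : E)
    (h1 : R u (J u) v (J v) = 0)
    (h2 : R u (J v) u (J v) + R u v u v = 0)
    (hrot : ∀ u' v' : E,
      (u' = (Real.sqrt 2)⁻¹ • (u - J v) ∧ v' = (Real.sqrt 2)⁻¹ • (u + J v)) ∨
      (u' = (Real.sqrt 2)⁻¹ • (u - v) ∧ v' = (Real.sqrt 2)⁻¹ • (u + v)) →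
        R u' (J u') v' (J v') = 0 ∧ R u' (J v') u' (J v') + R u' v' u' v' = 0) :
    R u v u v = 0 ∧ R u (J v) u (J v) = 0 ∧
      R u (J u) u (J u) + R v (J v) v (J v) = 0 := by
  have hc : (Real.sqrt 2)⁻¹ ^ 4 ≠ 0 := by positivity
  have hrot_J := (hrot _ _ (Or.inl ⟨rfl, rfl⟩)).1
  have hrot_id := (hrot _ _ (Or.inr ⟨rfl, rfl⟩)).1
  rw [curvature_smul_apply_J_smul, mul_eq_zero, or_iff_right hc,
    curvature_rotation_sub_add_J hA hP hJ2 hK] at hrot_J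
  rw [curvature_smul_apply_J_smul, mul_eq_zero, or_iff_right hc,
    curvature_rotation_sub_add hA hP hJ2 hK] at hrot_id
  refine ⟨?_, ?_, ?_⟩ <;> linarith

/-- Let `R` be a Kähler algebraic curvature tensor on `(V,J)` and `u, v`
orthonormal with `⟪u,Jv⟫ = 0`, satisfying `R(u,Ju,v,Jv) = 0` and
`R(u,Jv,u,Jv) + R(u,v,u,v) = 0`, and suppose the same relations hold for the rotated
pairs `((u−Jv)/√2, (u+Jv)/√2)` and `((u−v)/√2, (u+v)/√2)`.  Then
`R(u,v,u,v) = R(u,Jv,u,Jv) = 0` and `R(u,Ju,u,Ju) + R(v,Jv,v,Jv) = 0`. -/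
theorem kaehler_rotation_vanishing
    {E : Type*} [NormedAddCommGroup E] [InnerProductSpace ℝ E]
    (R : E →ₗ[ℝ] E →ₗ[ℝ] E →ₗ[ℝ] E →ₗ[ℝ] ℝ)
    (hA : ∀ x y z w, R x y z w = - R y x z w)
    (hP : ∀ x y z w, R x y z w = R z w x y)
    (hB1 : ∀ x y z w, R x y z w + R y z x w + R z x y w = 0)
    (J : E →ₗ[ℝ] E)
    (hJ2 : ∀ x, J (J x) = -x)
    (hJO : ∀ x y, ⟪J x, J y⟫ = ⟪x, y⟫)
    (hK : ∀ x y z w, R (J x) (J y) z w = R x y z w)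
    (u v : E) (hu : ‖u‖ = 1) (hv : ‖v‖ = 1)
    (huv : ⟪u, v⟫ = 0) (huJv : ⟪u, J v⟫ = 0)
    (h1 : R u (J u) v (J v) = 0)
    (h2 : R u (J v) u (J v) + R u v u v = 0)
    (hrot : ∀ u' v' : E,
      (u' = (Real.sqrt 2)⁻¹ • (u - J v) ∧ v' = (Real.sqrt 2)⁻¹ • (u + J v)) ∨
      (u' = (Real.sqrt 2)⁻¹ • (u - v) ∧ v' = (Real.sqrt 2)⁻¹ • (u + v)) →
        R u' (J u') v' (J v') = 0 ∧ R u' (J v') u' (J v') + R u' v' u' v' = 0) :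
    R u v u v = 0 ∧ R u (J v) u (J v) = 0 ∧
      R u (J u) u (J u) + R v (J v) v (J v) = 0 :=
  kaehler_rotation_vanishing_general R hA hP J hJ2 hK u v h1 h2 hrot
end
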